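/- arXiv:2401.02829 — 3 statements merged into one kernel-verified Lean document; each statement's English description precedes it below -/
import Mathlib

section
/- Let N ≥ 2 and define f_p(t) = N p^{N−1} t^{N−1} − (N−1) p^N t^N for p, t ∈ [0,1]. Then for p sufficiently close to 1, f_p has a fixed point t_p ∈ (0,1) which is attracting from above: the iterates p_j = f_p^{(j)}(1) form a sequence converging to t_p, and in particular p_j ≥ t_p > 0 for all j. -/
/-- The polynomial `f_p(t) = N p^{N-1} t^{N-1} - (N-1) p^N t^N`. -/
noncomputable def fullPoly (N : ℕ) (p t : ℝ) : ℝ :=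
  (N : ℝ) * p ^ (N - 1) * t ^ (N - 1) - ((N : ℝ) - 1) * p ^ N * t ^ N

noncomputable def phiP (N : ℕ) (s : ℝ) : ℝ :=
  (N : ℝ) * s ^ (N - 1) - ((N : ℝ) - 1) * s ^ N

lemma fullPoly_eq_phiP (N : ℕ) (p t : ℝ) : fullPoly N p t = phiP N (p * t) := by
  unfold fullPoly phiP
  rw [mul_pow, mul_pow]
  ring

lemma phiP_hasDerivAt (N : ℕ) (hN : 2 ≤ N) (s : ℝ) :
    HasDerivAt (phiP N) ((N : ℝ) * ((N : ℝ) - 1) * s ^ (N - 2) * (1 - s)) s := by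
  have h1 : HasDerivAt (fun x : ℝ => (N : ℝ) * x ^ (N - 1))
      ((N : ℝ) * (((N - 1 : ℕ) : ℝ) * s ^ (N - 1 - 1))) s :=
    (hasDerivAt_pow (N - 1) s).const_mul _
  have h2 : HasDerivAt (fun x : ℝ => ((N : ℝ) - 1) * x ^ N)
      (((N : ℝ) - 1) * (((N : ℕ) : ℝ) * s ^ (N - 1))) s :=
    (hasDerivAt_pow N s).const_mul _
  have h3 := h1.sub h2
  refine h3.congr_deriv ?_
  have e1 : N - 1 - 1 = N - 2 := by omega
  have e2 : s ^ (N - 1) = s ^ (N - 2) * s := by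
    rw [← pow_succ]; congr 1; omega
  have e3 : ((N - 1 : ℕ) : ℝ) = (N : ℝ) - 1 := by
    push_cast [Nat.cast_sub (by omega : 1 ≤ N)]; ring
  rw [e1, e2, e3]
  ring

lemma phiP_strictMonoOn (N : ℕ) (hN : 2 ≤ N) :
    StrictMonoOn (phiP N) (Set.Icc (0 : ℝ) 1) := by
  have hc : ContinuousOn (phiP N) (Set.Icc (0 : ℝ) 1) := by
    unfold phiP; fun_prop
  apply strictMonoOn_of_deriv_pos (convex_Icc 0 1) hc
  intro x hx
  rw [interior_Icc] at hx
  rw [(phiP_hasDerivAt N hN x).deriv]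
  have hN1 : (1 : ℝ) ≤ (N : ℝ) - 1 := by
    have : (2 : ℝ) ≤ (N : ℝ) := by exact_mod_cast hN
    linarith
  have h1 : (0 : ℝ) < x ^ (N - 2) := pow_pos hx.1 _
  have h2 : (0 : ℝ) < 1 - x := by linarith [hx.2]
  have h3 : (0 : ℝ) < (N : ℝ) := by linarith
  positivity

lemma phiP_one (N : ℕ) : phiP N 1 = 1 := by
  simp [phiP]

lemma phiP_lower (N : ℕ) (hN : 2 ≤ N) (s : ℝ) (hs0 : 0 ≤ s) (hs1 : s ≤ 1) :
    1 - (((N : ℝ) - 1) * (1 - s)) ^ 2 ≤ phiP N s := by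
  have hN1 : (1 : ℝ) ≤ (N : ℝ) - 1 := by
    have : (2 : ℝ) ≤ (N : ℝ) := by exact_mod_cast hN
    linarith
  have hb : 1 + ((N - 1 : ℕ) : ℝ) * (s - 1) ≤ (1 + (s - 1)) ^ (N - 1) :=
    one_add_mul_le_pow (by linarith : (-2 : ℝ) ≤ s - 1) (N - 1)
  have e3 : ((N - 1 : ℕ) : ℝ) = (N : ℝ) - 1 := by
    push_cast [Nat.cast_sub (by omega : 1 ≤ N)]; ring
  rw [e3] at hb
  have hb' : 1 + ((N : ℝ) - 1) * (s - 1) ≤ s ^ (N - 1) := by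
    have : 1 + (s - 1) = s := by ring
    rwa [this] at hb
  have key : phiP N s = s ^ (N - 1) * ((N : ℝ) - ((N : ℝ) - 1) * s) := by
    unfold phiP
    have e2 : s ^ N = s ^ (N - 1) * s := by
      rw [← pow_succ]; congr 1; omega
    rw [e2]; ring
  have hpos : 0 ≤ (N : ℝ) - ((N : ℝ) - 1) * s := by nlinarith
  calc 1 - (((N : ℝ) - 1) * (1 - s)) ^ 2
      = (1 + ((N : ℝ) - 1) * (s - 1)) * ((N : ℝ) - ((N : ℝ) - 1) * s) := by ring
    _ ≤ s ^ (N - 1) * ((N : ℝ) - ((N : ℝ) - 1) * s) :=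
        mul_le_mul_of_nonneg_right hb' hpos
    _ = phiP N s := key.symm

/-- for `p` sufficiently close to `1`, `f_p` has a fixed point
`t_p ∈ (0,1)` attracting from above: the iterates `p_j = f_p^{(j)}(1)` converge to `t_p`,
and in particular `p_j ≥ t_p > 0` for all `j`. -/
theorem stmt_7 (N : ℕ) (hN : 2 ≤ N) :
    ∃ pA : ℝ, pA < 1 ∧ ∀ p : ℝ, pA ≤ p → p < 1 →
      ∃ tp : ℝ, 0 < tp ∧ tp < 1 ∧ fullPoly N p tp = tp ∧
        Filter.Tendsto (fun j : ℕ => (fullPoly N p)^[j] 1) Filter.atTop (nhds tp) ∧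
        ∀ j : ℕ, tp ≤ (fullPoly N p)^[j] 1 := by
  have hN1 : (1 : ℝ) ≤ (N : ℝ) - 1 := by
    have : (2 : ℝ) ≤ (N : ℝ) := by exact_mod_cast hN
    linarith
  obtain ⟨c, hc⟩ : ∃ c : ℝ, c = (N : ℝ) - 1 := ⟨_, rfl⟩
  rw [← hc] at hN1
  obtain ⟨ε, hε⟩ : ∃ ε : ℝ, ε = 1 / (4 * c ^ 2) := ⟨_, rfl⟩
  have hc0 : 0 < c := by linarith
  have hε0 : 0 < ε := by rw [hε]; positivity
  have hceq : c ^ 2 * ε = 1 / 4 := by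
    rw [hε]; field_simp
  have hε4 : ε ≤ 1 / 4 := by
    have h7 : (0 : ℝ) ≤ (c ^ 2 - 1) * ε :=
      mul_nonneg (by nlinarith [sq_nonneg (c - 1)]) hε0.le
    nlinarith [h7, hceq]
  refine ⟨1 - ε / 2, by linarith, ?_⟩
  intro p hpA hp1
  have hp0 : 0 ≤ p := by linarith
  obtain ⟨a, ha⟩ : ∃ a : ℝ, a = 1 - ε := ⟨_, rfl⟩
  have ha0 : 0 < a := by rw [ha]; linarith
  have ha1 : a < 1 := by rw [ha]; linarith
  -- invariance of [a,1]
  have inv : ∀ t : ℝ, a ≤ t → t ≤ 1 → a ≤ fullPoly N p t := by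
    intro t ht ht1
    rw [fullPoly_eq_phiP]
    have ht0 : 0 ≤ t := by linarith
    have hpt0 : 0 ≤ p * t := mul_nonneg hp0 ht0
    have hpt1 : p * t ≤ 1 := mul_le_one₀ (le_of_lt hp1) ht0 ht1
    have hlb : 1 - (3 / 2) * ε ≤ p * t := by
      have h1 : (1 - ε / 2) * a ≤ p * t :=
        mul_le_mul hpA ht (le_of_lt ha0) hp0
      rw [ha] at h1
      nlinarith [sq_nonneg ε]
    have := phiP_lower N hN (p * t) hpt0 hpt1
    have hsq : (c * (1 - p * t)) ^ 2 ≤ ε := by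
      have h2 : 0 ≤ 1 - p * t := by linarith
      have h3 : 1 - p * t ≤ (3 / 2) * ε := by linarith
      have h4 : (1 - p * t) ^ 2 ≤ (9 / 4) * ε ^ 2 := by nlinarith
      have h5 : (c * (1 - p * t)) ^ 2 = c ^ 2 * (1 - p * t) ^ 2 := by ring
      rw [h5]
      have h6 : c ^ 2 * (1 - p * t) ^ 2 ≤ c ^ 2 * ((9 / 4) * ε ^ 2) :=
        mul_le_mul_of_nonneg_left h4 (by positivity)
      have h7 : c ^ 2 * ((9 / 4) * ε ^ 2) = (9 / 16) * ε := by
        have : c ^ 2 * ((9 / 4) * ε ^ 2) = (9 / 4) * ε * (c ^ 2 * ε) := by ring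
        rw [this, hceq]; ring
      linarith [h6, h7, hε0]
    rw [← hc] at this
    rw [ha]
    linarith
  -- monotonicity
  have hsm := phiP_strictMonoOn N hN
  have hmono : ∀ x y : ℝ, 0 ≤ x → x ≤ y → y ≤ 1 →
      fullPoly N p x ≤ fullPoly N p y := by
    intro x y hx hxy hy1
    rw [fullPoly_eq_phiP, fullPoly_eq_phiP]
    have hmx : p * x ∈ Set.Icc (0 : ℝ) 1 :=
      ⟨mul_nonneg hp0 hx, mul_le_one₀ (le_of_lt hp1) hx (by linarith)⟩
    have hmy : p * y ∈ Set.Icc (0 : ℝ) 1 :=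
      ⟨mul_nonneg hp0 (by linarith), mul_le_one₀ (le_of_lt hp1) (by linarith) hy1⟩
    exact hsm.monotoneOn hmx hmy (mul_le_mul_of_nonneg_left hxy hp0)
  obtain ⟨g, hg⟩ : ∃ g : ℕ → ℝ, g = fun j => (fullPoly N p)^[j] 1 := ⟨_, rfl⟩
  have hsucc : ∀ j : ℕ, g (j + 1) = fullPoly N p (g j) := by
    intro j; rw [hg]; exact Function.iterate_succ_apply' _ _ _
  have hg0 : g 0 = 1 := by rw [hg]; rfl
  have hstep : ∀ j : ℕ, (a ≤ g j ∧ g j ≤ 1) ∧ g (j + 1) ≤ g j := by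
    intro j
    induction j with
    | zero =>
      refine ⟨⟨by rw [hg0]; exact le_of_lt ha1, le_of_eq hg0⟩, ?_⟩
      rw [hsucc, hg0]
      rw [fullPoly_eq_phiP, mul_one]
      calc phiP N p ≤ phiP N 1 :=
            hsm.monotoneOn ⟨hp0, le_of_lt hp1⟩ ⟨by norm_num, le_refl 1⟩ (le_of_lt hp1)
        _ = 1 := phiP_one N
    | succ k ih =>
      obtain ⟨⟨hka, hk1⟩, hkd⟩ := ih
      have h1 : a ≤ g (k + 1) := by
        rw [hsucc]; exact inv (g k) hka hk1
      have h2 : g (k + 1) ≤ 1 := le_trans hkd hk1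
      refine ⟨⟨h1, h2⟩, ?_⟩
      rw [hsucc (k + 1)]
      have hm := hmono (g (k + 1)) (g k) (by linarith) hkd hk1
      rw [← hsucc k] at hm
      exact hm
  have hanti : Antitone g := antitone_nat_of_succ_le (fun j => (hstep j).2)
  have hbdd : BddBelow (Set.range g) := by
    refine ⟨a, ?_⟩
    rintro _ ⟨j, rfl⟩
    exact (hstep j).1.1
  obtain ⟨tp, htp⟩ : ∃ tp : ℝ, tp = ⨅ j, g j := ⟨_, rfl⟩
  have htend : Filter.Tendsto g Filter.atTop (nhds tp) := by
    rw [htp]; exact tendsto_atTop_ciInf hanti hbdd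
  have hge : ∀ j : ℕ, tp ≤ g j := by
    intro j; rw [htp]; exact ciInf_le hbdd j
  have htpa : a ≤ tp := by rw [htp]; exact le_ciInf (fun j => (hstep j).1.1)
  have htp0 : 0 < tp := lt_of_lt_of_le ha0 htpa
  have hg1lt : g 1 < 1 := by
    rw [hsucc, hg0, fullPoly_eq_phiP, mul_one]
    calc phiP N p < phiP N 1 :=
          hsm ⟨hp0, le_of_lt hp1⟩ ⟨by norm_num, le_refl 1⟩ hp1
      _ = 1 := phiP_one N
  have htp1 : tp < 1 := lt_of_le_of_lt (hge 1) hg1lt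
  have hcont : Continuous (fullPoly N p) := by
    unfold fullPoly; fun_prop
  have hfix : fullPoly N p tp = tp := by
    have h1 : Filter.Tendsto (fun j : ℕ => g (j + 1)) Filter.atTop (nhds tp) :=
      htend.comp (Filter.tendsto_add_atTop_nat 1)
    have h2 : Filter.Tendsto (fun j : ℕ => fullPoly N p (g j)) Filter.atTop
        (nhds (fullPoly N p tp)) := (hcont.tendsto tp).comp htend
    have h3 : (fun j : ℕ => g (j + 1)) = fun j : ℕ => fullPoly N p (g j) :=
      funext hsucc
    rw [h3] at h1
    exact tendsto_nhds_unique h2 h1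
  refine ⟨tp, htp0, htp1, hfix, ?_, ?_⟩
  · rw [← hg]; exact htend
  · intro j
    simpa [hg] using hge j
end

section
/- Let n ≥ 2, m ≥ 2 be integers and 0 < p ≤ 1. Suppose nonnegative reals θ_V, θ_H, τ_H satisfy θ_V ≤ θ_H ≤ τ_H ≤ 1 and τ_H ≤ (2 m p θ_V + (2m−1)(p² τ_H + 2 p (1−p) θ_H))^n. Then either τ_H = 0 or τ_H ≥ (4m)^{−n/(n−1)}. -/
/-!
Every term on the right-hand side is at most a multiple of `τ_H`: `p θ_V ≤ τ_H`, and
`p² τ_H + 2p(1-p) θ_H ≤ (1 - (1-p)²) τ_H ≤ τ_H`. Hence `τ_H ≤ (4m τ_H)^n`, and for `τ_H > 0`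
dividing by `τ_H` gives `(4m)^{-n} ≤ τ_H^{n-1}`.
-/

theorem sq_mul_add_two_mul_one_sub_mul_le {p θ τ : ℝ} (hp0 : 0 ≤ p) (hp1 : p ≤ 1)
    (hθ : θ ≤ τ) (hτ : 0 ≤ τ) : p ^ 2 * τ + 2 * p * (1 - p) * θ ≤ τ := by
  have hp : 0 ≤ 2 * p * (1 - p) := by nlinarith
  calc p ^ 2 * τ + 2 * p * (1 - p) * θ ≤ p ^ 2 * τ + 2 * p * (1 - p) * τ := by gcongr
    _ = τ - (1 - p) ^ 2 * τ := by ring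
    _ ≤ τ := sub_le_self _ (by positivity)

theorem rpow_neg_div_le_of_le_mul_pow {c τ : ℝ} {n : ℕ} (hc : 0 < c) (hτ : 0 < τ) (hn : 2 ≤ n)
    (h : τ ≤ (c * τ) ^ n) : c ^ (-(n : ℝ) / ((n : ℝ) - 1)) ≤ τ := by
  have hn1 : ((n - 1 : ℕ) : ℝ) = (n : ℝ) - 1 := by rw [Nat.cast_sub (by omega), Nat.cast_one]
  have hpow : (c ^ (-(n : ℝ) / ((n : ℝ) - 1))) ^ (n - 1) = (c ^ n)⁻¹ := by
    have hn1_ne : (n : ℝ) - 1 ≠ 0 := by rw [← hn1]; exact Nat.cast_ne_zero.2 (by omega)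
    rw [← Real.rpow_mul_natCast hc.le, hn1, div_mul_cancel₀ _ hn1_ne, Real.rpow_neg hc.le,
      Real.rpow_natCast]
  have hτn : τ ^ n = τ ^ (n - 1) * τ := by rw [← pow_succ, Nat.sub_add_cancel (by omega)]
  have hone : 1 ≤ c ^ n * τ ^ (n - 1) := by
    rw [mul_pow, hτn, ← mul_assoc] at h
    exact le_of_mul_le_mul_right (by rwa [one_mul]) hτ
  refine le_of_pow_le_pow_left₀ (by omega : n - 1 ≠ 0) hτ.le ?_
  rw [hpow, inv_le_iff_one_le_mul₀' (by positivity)]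
  exact hone

theorem stmt_11_general (n m : ℕ) (hn : 2 ≤ n) (hm : 2 ≤ m) (p : ℝ) (hp0 : 0 < p) (hp1 : p ≤ 1)
    (θV θH τH : ℝ) (h0 : 0 ≤ θV) (h1 : θV ≤ θH) (h2 : θH ≤ τH)
    (hineq : τH ≤ (2 * m * p * θV +
      (2 * m - 1) * (p ^ 2 * τH + 2 * p * (1 - p) * θH)) ^ n) :
    τH = 0 ∨ (4 * (m : ℝ)) ^ (-(n : ℝ) / ((n : ℝ) - 1)) ≤ τH := by
  rcases (h0.trans (h1.trans h2)).eq_or_lt with hτ | hτ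
  · exact Or.inl hτ.symm
  right
  have hm1 : (0 : ℝ) ≤ 2 * m - 1 := by
    have : (2 : ℝ) ≤ m := by exact_mod_cast hm
    linarith
  have hpair := sq_mul_add_two_mul_one_sub_mul_le hp0.le hp1 h2 hτ.le
  have hvert : p * θV ≤ τH := (mul_le_of_le_one_left h0 hp1).trans (h1.trans h2)
  have hsum_nonneg : 0 ≤ 2 * m * p * θV + (2 * m - 1) * (p ^ 2 * τH + 2 * p * (1 - p) * θH) := by
    have hθH : 0 ≤ θH := h0.trans h1
    have hq : 0 ≤ 1 - p := sub_nonneg.2 hp1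
    have : 0 ≤ 2 * p * (1 - p) * θH := by positivity
    positivity
  have hsum_le : 2 * m * p * θV + (2 * m - 1) * (p ^ 2 * τH + 2 * p * (1 - p) * θH)
      ≤ 4 * m * τH := by
    nlinarith [mul_le_mul_of_nonneg_left hpair hm1]
  exact rpow_neg_div_le_of_le_mul_pow (by positivity) hτ hn
    (hineq.trans (pow_le_pow_left₀ hsum_nonneg hsum_le n))

/-- the key quantitative inequality. If `0 ≤ θ_V ≤ θ_H ≤ τ_H ≤ 1` and
`τ_H ≤ (2mp θ_V + (2m-1)(p² τ_H + 2p(1-p) θ_H))^n`, then `τ_H = 0` or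
`τ_H ≥ (4m)^{-n/(n-1)}`. -/
theorem stmt_11 (n m : ℕ) (hn : 2 ≤ n) (hm : 2 ≤ m) (p : ℝ) (hp0 : 0 < p) (hp1 : p ≤ 1)
    (θV θH τH : ℝ) (h0 : 0 ≤ θV) (h1 : θV ≤ θH) (h2 : θH ≤ τH) (h3 : τH ≤ 1)
    (hineq : τH ≤ (2 * m * p * θV +
      (2 * m - 1) * (p ^ 2 * τH + 2 * p * (1 - p) * θH)) ^ n) :
    τH = 0 ∨ (4 * (m : ℝ)) ^ (-(n : ℝ) / ((n : ℝ) - 1)) ≤ τH :=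
  stmt_11_general n m hn hm p hp0 hp1 θV θH τH h0 h1 h2 hineq
end

section
/- Let 0 < p < 1 and m > n ≥ 2. In the statistically self-affine fractal percolation model, almost surely F contains no horizontal line segment and no vertical line segment. -/
open MeasureTheory ProbabilityTheory
open scoped ENNReal

/-- The lower-left corner of the level-`w.length` rectangle with address `w`
(first digit coarsest): digit `(i, j)` refines the `x`-coordinate in base `n`
and the `y`-coordinate in base `m`. -/
noncomputable def affCorner (n m : ℕ) : List (Fin n × Fin m) → ℝ × ℝ
  | [] => (0, 0)
  | d :: w => (((d.1 : ℝ) + (affCorner n m w).1) / n, ((d.2 : ℝ) + (affCorner n m w).2) / m)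

/-- The closed level-`k` rectangle of size `n^{-k} × m^{-k}` with address `w`
(`k = w.length`). -/
noncomputable def affRect (n m : ℕ) (w : List (Fin n × Fin m)) : Set (ℝ × ℝ) :=
  Set.Icc (affCorner n m w)
    ((affCorner n m w).1 + ((n : ℝ) ^ w.length)⁻¹,
     (affCorner n m w).2 + ((m : ℝ) ^ w.length)⁻¹)

/-- A rectangle (address `w`) survives in configuration `ω` if every ancestor,
including itself, has been selected. -/
def affRetained {n m : ℕ} (ω : List (Fin n × Fin m) → Bool)
    (w : List (Fin n × Fin m)) : Prop :=
  ∀ v : List (Fin n × Fin m), v <+: w → v ≠ [] → ω v = true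

/-- The statistically self-affine fractal percolation limit set
`F(ω) = ⋂_k ⋃ {retained level-k rectangles}`. -/
noncomputable def affLimitSet (n m : ℕ) (ω : List (Fin n × Fin m) → Bool) :
    Set (ℝ × ℝ) :=
  ⋂ k : ℕ, ⋃ w ∈ {w : List (Fin n × Fin m) | w.length = k ∧ affRetained ω w},
    affRect n m w

namespace Aff

variable {n m : ℕ}

def natX : List (Fin n × Fin m) → ℕ
  | [] => 0
  | d :: w => d.1.val * n ^ w.length + natX w

def natY : List (Fin n × Fin m) → ℕ
  | [] => 0
  | d :: w => d.2.val * m ^ w.length + natY w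

lemma natX_lt (w : List (Fin n × Fin m)) : natX w < n ^ w.length := by
  induction w with
  | nil => simp [natX]
  | cons d w ih =>
    have hd : d.1.val + 1 ≤ n := d.1.isLt
    have : d.1.val * n ^ w.length + natX w < (d.1.val + 1) * n ^ w.length := by
      simpa [add_mul] using ih
    calc natX (d :: w) < (d.1.val + 1) * n ^ w.length := this
      _ ≤ n * n ^ w.length := Nat.mul_le_mul_right _ hd
      _ = n ^ (d :: w).length := by rw [List.length_cons]; ring

lemma natY_lt (w : List (Fin n × Fin m)) : natY w < m ^ w.length := by
  induction w with
  | nil => simp [natY]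
  | cons d w ih =>
    have hd : d.2.val + 1 ≤ m := d.2.isLt
    have : d.2.val * m ^ w.length + natY w < (d.2.val + 1) * m ^ w.length := by
      simpa [add_mul] using ih
    calc natY (d :: w) < (d.2.val + 1) * m ^ w.length := this
      _ ≤ m * m ^ w.length := Nat.mul_le_mul_right _ hd
      _ = m ^ (d :: w).length := by rw [List.length_cons]; ring

lemma affCorner_eq (hn : 0 < n) (hm : 0 < m) (w : List (Fin n × Fin m)) :
    affCorner n m w = ((natX w : ℝ) / (n : ℝ) ^ w.length, (natY w : ℝ) / (m : ℝ) ^ w.length) := by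
  induction w with
  | nil => simp [affCorner, natX, natY]
  | cons d w ih =>
    have hn' : ((n : ℝ)) ≠ 0 := by positivity
    have hm' : ((m : ℝ)) ≠ 0 := by positivity
    have hnp : ((n : ℝ) ^ w.length) ≠ 0 := by positivity
    have hmp : ((m : ℝ) ^ w.length) ≠ 0 := by positivity
    simp only [affCorner, ih, natX, natY, List.length_cons, Prod.mk.injEq]
    constructor
    · push_cast
      field_simp
      ring_nf
    · push_cast
      field_simp
      ring_nf

lemma eq_of_natXY : ∀ (w w' : List (Fin n × Fin m)), w.length = w'.length →
    natX w = natX w' → natY w = natY w' → w = w'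
  | [], [], _, _, _ => rfl
  | d :: w, d' :: w', hl, hx, hy => by
    simp only [List.length_cons, Nat.add_right_cancel_iff] at hl
    have hxw := natX_lt w
    have hxw' := natX_lt w'
    have hyw := natY_lt w
    have hyw' := natY_lt w'
    rw [hl] at hxw
    rw [hl] at hyw
    simp only [natX, natY, hl] at hx hy
    have key : ∀ (a a' x x' A : ℕ), x < A → x' < A → a * A + x = a' * A + x' →
        a = a' ∧ x = x' := by
      intro a a' x x' A hx hx' h
      have ha : a = a' := by
        have h1 : (a * A + x) / A = a := by
          rw [mul_comm, Nat.mul_add_div (by omega), Nat.div_eq_of_lt hx]; omega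
        have h2 : (a' * A + x') / A = a' := by
          rw [mul_comm, Nat.mul_add_div (by omega), Nat.div_eq_of_lt hx']; omega
        rw [← h1, h, h2]
      subst ha
      refine ⟨rfl, by omega⟩
    obtain ⟨hd1, hx'⟩ := key _ _ _ _ _ hxw hxw' hx
    obtain ⟨hd2, hy'⟩ := key _ _ _ _ _ hyw hyw' hy
    have hdd : d = d' := by
      ext
      · exact hd1
      · exact hd2
    rw [hdd, eq_of_natXY w w' hl hx' hy']



def mkAddr (hn : 0 < n) (hm : 0 < m) : ℕ → ℕ → ℕ → List (Fin n × Fin m)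
  | 0, _, _ => []
  | k + 1, u, v =>
      (⟨u / n ^ k % n, Nat.mod_lt _ hn⟩, ⟨v / m ^ k % m, Nat.mod_lt _ hm⟩) :: mkAddr hn hm k u v

lemma mkAddr_length (hn : 0 < n) (hm : 0 < m) (k u v : ℕ) :
    (mkAddr hn hm k u v).length = k := by
  induction k with
  | zero => rfl
  | succ k ih => simp [mkAddr, ih]

lemma natX_mkAddr (hn : 0 < n) (hm : 0 < m) (k u v : ℕ) :
    natX (mkAddr hn hm k u v) = u % n ^ k := by
  induction k with
  | zero => simp [mkAddr, natX, Nat.mod_one]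
  | succ k ih =>
    simp only [mkAddr, natX, mkAddr_length, ih]
    rw [pow_succ, Nat.mod_mul]
    ring

lemma natY_mkAddr (hn : 0 < n) (hm : 0 < m) (k u v : ℕ) :
    natY (mkAddr hn hm k u v) = v % m ^ k := by
  induction k with
  | zero => simp [mkAddr, natY, Nat.mod_one]
  | succ k ih =>
    simp only [mkAddr, natY, mkAddr_length, ih]
    rw [pow_succ, Nat.mod_mul]
    ring

/-- Characterization of membership in a level-`k` rectangle. -/
lemma mem_affRect (hn : 0 < n) (hm : 0 < m) {w : List (Fin n × Fin m)} {x y : ℝ}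
    (h : (x, y) ∈ affRect n m w) :
    ((natX w : ℝ) ≤ x * (n : ℝ) ^ w.length ∧ x * (n : ℝ) ^ w.length ≤ natX w + 1) ∧
    ((natY w : ℝ) ≤ y * (m : ℝ) ^ w.length ∧ y * (m : ℝ) ^ w.length ≤ natY w + 1) := by
  obtain ⟨h1, h2⟩ := h
  rw [affCorner_eq hn hm] at h1 h2
  rw [Prod.le_def] at h1 h2
  obtain ⟨h11, h12⟩ := h1
  obtain ⟨h21, h22⟩ := h2
  simp only at h11 h12 h21 h22
  have hnp : (0:ℝ) < (n : ℝ) ^ w.length := by positivity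
  have hmp : (0:ℝ) < (m : ℝ) ^ w.length := by positivity
  constructor
  · constructor
    · calc (natX w : ℝ) = (natX w : ℝ) / (n:ℝ) ^ w.length * (n:ℝ) ^ w.length := by
            field_simp
        _ ≤ x * (n : ℝ) ^ w.length := by
            apply mul_le_mul_of_nonneg_right h11 hnp.le
    · have : x ≤ ((natX w : ℝ) + 1) / (n:ℝ) ^ w.length := by
        rw [add_div]
        rw [one_div]
        exact h21
      calc x * (n : ℝ) ^ w.length ≤ ((natX w : ℝ) + 1) / (n:ℝ) ^ w.length * (n:ℝ) ^ w.length :=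
            mul_le_mul_of_nonneg_right this hnp.le
        _ = (natX w : ℝ) + 1 := by field_simp
  · constructor
    · calc (natY w : ℝ) = (natY w : ℝ) / (m:ℝ) ^ w.length * (m:ℝ) ^ w.length := by
            field_simp
        _ ≤ y * (m : ℝ) ^ w.length := by
            apply mul_le_mul_of_nonneg_right h12 hmp.le
    · have : y ≤ ((natY w : ℝ) + 1) / (m:ℝ) ^ w.length := by
        rw [add_div]
        rw [one_div]
        exact h22
      calc y * (m : ℝ) ^ w.length ≤ ((natY w : ℝ) + 1) / (m:ℝ) ^ w.length * (m:ℝ) ^ w.length :=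
            mul_le_mul_of_nonneg_right this hmp.le
        _ = (natY w : ℝ) + 1 := by field_simp

lemma limit_mem_level {ω : List (Fin n × Fin m) → Bool} {q : ℝ × ℝ}
    (h : q ∈ affLimitSet n m ω) (k : ℕ) :
    ∃ w : List (Fin n × Fin m), w.length = k ∧ affRetained ω w ∧ q ∈ affRect n m w := by
  have := Set.mem_iInter.mp h k
  simp only [Set.mem_iUnion, Set.mem_setOf_eq] at this
  obtain ⟨w, ⟨hw1, hw2⟩, hw3⟩ := this
  exact ⟨w, hw1, hw2, hw3⟩

lemma limit_unit_square (hn : 0 < n) (hm : 0 < m) {ω : List (Fin n × Fin m) → Bool} {x y : ℝ}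
    (h : (x, y) ∈ affLimitSet n m ω) : 0 ≤ x ∧ x ≤ 1 ∧ 0 ≤ y ∧ y ≤ 1 := by
  obtain ⟨w, hw1, _, hw3⟩ := limit_mem_level h 0
  have hwnil : w = [] := List.length_eq_zero_iff.mp hw1
  subst hwnil
  obtain ⟨⟨h1, h2⟩, h3, h4⟩ := mem_affRect hn hm hw3
  simp [natX, natY] at h1 h2 h3 h4
  exact ⟨by linarith, by linarith, by linarith, by linarith⟩

section Prob

variable {p : ℝ} (μ : Measure (List (Fin n × Fin m) → Bool)) [IsProbabilityMeasure μ]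

lemma meas_true (w : List (Fin n × Fin m)) : MeasurableSet {ω : List (Fin n × Fin m) → Bool | ω w = true} := by
  have : {ω : List (Fin n × Fin m) → Bool | ω w = true} = (fun ω : List (Fin n × Fin m) → Bool => ω w) ⁻¹' {true} := rfl
  rw [this]
  exact (measurable_pi_apply w) (by trivial)

lemma prod_if_le_four (P Q : ℝ≥0∞) (j : Fin 4) :
    (∏ i : Fin 4, if i ≤ j then (if i = j then P else Q) else 1) = P * Q ^ (j : ℕ) := by
  rcases j with ⟨j, hj⟩
  interval_cases j <;>
    · rw [Fin.prod_univ_four]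
      simp [Fin.le_def, Fin.ext_iff, show ((0:Fin 4):ℕ) = 0 from rfl,
        show ((1:Fin 4):ℕ) = 1 from rfl, show ((2:Fin 4):ℕ) = 2 from rfl,
        show ((3:Fin 4):ℕ) = 3 from rfl]
      try ring

lemma meas_piece
    (hBer : ∀ w : List (Fin n × Fin m), μ {ω | ω w = true} = ENNReal.ofReal p)
    (hIndep : iIndepFun
      (fun w => fun ω : (List (Fin n × Fin m)) → Bool => ω w) μ)
    (N : ℕ) (C : Fin N × Fin 4 → List (Fin n × Fin m)) (hC : Function.Injective C)
    (f : Fin N → Fin 4) :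
    μ {ω | ∀ t : Fin N, ω (C (t, f t)) = true ∧ ∀ i : Fin 4, i < f t → ω (C (t, i)) = false}
      = ∏ t : Fin N, (ENNReal.ofReal p * (1 - ENNReal.ofReal p) ^ ((f t : ℕ))) := by
  classical
  set P := ENNReal.ofReal p with hP
  set Q := 1 - ENNReal.ofReal p with hQ
  set S : Finset (List (Fin n × Fin m)) :=
    (Finset.univ.filter fun ti : Fin N × Fin 4 => ti.2 ≤ f ti.1).image C with hS
  set sets : List (Fin n × Fin m) → Set Bool :=
    fun w => {x : Bool | x = true ↔ ∃ t : Fin N, C (t, f t) = w} with hsets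
  have key : {ω : List (Fin n × Fin m) → Bool |
      ∀ t : Fin N, ω (C (t, f t)) = true ∧ ∀ i : Fin 4, i < f t → ω (C (t, i)) = false}
      = ⋂ w ∈ S, (fun ω : List (Fin n × Fin m) → Bool => ω w) ⁻¹' sets w := by
    ext ω
    simp only [Set.mem_setOf_eq, Set.mem_iInter, Set.mem_preimage, hS, Finset.mem_image,
      Finset.mem_filter, Finset.mem_univ, true_and]
    constructor
    · rintro h w ⟨⟨t, i⟩, hle, rfl⟩
      simp only at hle
      rcases lt_or_eq_of_le hle with hlt | heq
      · have hfalse := (h t).2 i hlt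
        simp only [hsets, Set.mem_setOf_eq, hfalse]
        constructor
        · intro hcon; exact absurd hcon (by simp)
        · rintro ⟨t', ht'⟩
          have : (t', f t') = (t, i) := hC ht'
          have h1 : t' = t := (Prod.mk.injEq _ _ _ _).mp this |>.1
          have h2 : f t' = i := (Prod.mk.injEq _ _ _ _).mp this |>.2
          subst h1
          exact absurd (h2 ▸ hlt) (lt_irrefl _)
      · subst heq
        have hex : (∃ t' : Fin N, C (t', f t') = C (t, f t)) := ⟨t, rfl⟩
        simp [hsets, (h t).1, hex]
    · intro h t
      constructor
      · have := h (C (t, f t)) ⟨(t, f t), le_refl _, rfl⟩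
        simp only [hsets, Set.mem_setOf_eq] at this
        exact this.mpr ⟨t, rfl⟩
      · intro i hlt
        have := h (C (t, i)) ⟨(t, i), hlt.le, rfl⟩
        simp only [hsets, Set.mem_setOf_eq] at this
        by_contra hcon
        have htrue : ω (C (t, i)) = true := by
          cases hval : ω (C (t, i)) with
          | false => exact absurd hval hcon
          | true => rfl
        obtain ⟨t', ht'⟩ := this.mp htrue
        have heq : (t', f t') = (t, i) := hC ht'
        have h1 : t' = t := (Prod.mk.injEq _ _ _ _).mp heq |>.1
        have h2 : f t' = i := (Prod.mk.injEq _ _ _ _).mp heq |>.2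
        subst h1
        exact absurd (h2 ▸ hlt) (lt_irrefl _)
  rw [key]
  rw [iIndepFun_iff_measure_inter_preimage_eq_mul.mp hIndep S (fun w _ => by trivial)]
  have hfactor : ∀ ti : Fin N × Fin 4, ti.2 ≤ f ti.1 →
      μ ((fun ω : List (Fin n × Fin m) → Bool => ω (C ti)) ⁻¹' sets (C ti))
        = if ti.2 = f ti.1 then P else Q := by
    rintro ⟨t, i⟩ hle
    simp only at hle ⊢
    rcases lt_or_eq_of_le hle with hlt | heq
    · have hne : ¬ (i = f t) := fun hcon => absurd (hcon ▸ hlt) (lt_irrefl _)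
      rw [if_neg hne]
      have hsetw : sets (C (t, i)) = {false} := by
        ext x
        simp only [hsets, Set.mem_setOf_eq, Set.mem_singleton_iff]
        constructor
        · intro hx
          cases x with
          | false => rfl
          | true =>
            obtain ⟨t', ht'⟩ := hx.mp rfl
            have heq2 : (t', f t') = (t, i) := hC ht'
            have h1 : t' = t := (Prod.mk.injEq _ _ _ _).mp heq2 |>.1
            have h2 : f t' = i := (Prod.mk.injEq _ _ _ _).mp heq2 |>.2
            subst h1
            exact absurd (h2 ▸ hlt) (lt_irrefl _)
        · rintro rfl
          constructor
          · intro hcon; exact absurd hcon (by simp)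
          · rintro ⟨t', ht'⟩
            have heq2 : (t', f t') = (t, i) := hC ht'
            have h1 : t' = t := (Prod.mk.injEq _ _ _ _).mp heq2 |>.1
            have h2 : f t' = i := (Prod.mk.injEq _ _ _ _).mp heq2 |>.2
            subst h1
            exact absurd (h2 ▸ hlt) (lt_irrefl _)
      rw [hsetw]
      have hpre : (fun ω : List (Fin n × Fin m) → Bool => ω (C (t, i))) ⁻¹' {false}
          = {ω : List (Fin n × Fin m) → Bool | ω (C (t, i)) = true}ᶜ := by
        ext ω
        simp [Set.mem_preimage]
      rw [hpre, measure_compl (meas_true _) (measure_ne_top μ _), hBer, measure_univ]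
    · subst heq
      rw [if_pos rfl]
      have hsetw : sets (C (t, f t)) = {true} := by
        ext x
        simp only [hsets, Set.mem_setOf_eq, Set.mem_singleton_iff]
        constructor
        · intro hx
          cases x with
          | true => rfl
          | false =>
            exfalso
            exact Bool.false_ne_true (hx.mpr ⟨t, rfl⟩)
        · rintro rfl
          exact ⟨fun _ => ⟨t, rfl⟩, fun _ => rfl⟩
      rw [hsetw]
      have hpre : (fun ω : List (Fin n × Fin m) → Bool => ω (C (t, f t))) ⁻¹' {true}
          = {ω : List (Fin n × Fin m) → Bool | ω (C (t, f t)) = true} := by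
        ext ω; simp [Set.mem_preimage]
      rw [hpre, hBer]
  rw [hS, Finset.prod_image (fun a _ b _ hab => hC hab)]
  have : ∀ ti ∈ Finset.univ.filter fun ti : Fin N × Fin 4 => ti.2 ≤ f ti.1,
      μ ((fun ω : List (Fin n × Fin m) → Bool => ω (C ti)) ⁻¹' sets (C ti))
        = if ti.2 = f ti.1 then P else Q := by
    intro ti hti
    exact hfactor ti (Finset.mem_filter.mp hti).2
  rw [Finset.prod_congr rfl this, Finset.prod_filter]
  rw [Fintype.prod_prod_type]
  apply Finset.prod_congr rfl
  intro t _
  exact prod_if_le_four P Q (f t)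

lemma prob_core
    (hBer : ∀ w : List (Fin n × Fin m), μ {ω | ω w = true} = ENNReal.ofReal p)
    (hIndep : iIndepFun
      (fun w => fun ω : (List (Fin n × Fin m)) → Bool => ω w) μ)
    (N : ℕ) (C : Fin N × Fin 4 → List (Fin n × Fin m)) (hC : Function.Injective C) :
    μ {ω | ∀ t : Fin N, ∃ i : Fin 4, ω (C (t, i)) = true}
      ≤ (∑ i : Fin 4, ENNReal.ofReal p * (1 - ENNReal.ofReal p) ^ ((i : ℕ))) ^ N := by
  classical
  have hsub : {ω : List (Fin n × Fin m) → Bool | ∀ t : Fin N, ∃ i : Fin 4, ω (C (t, i)) = true}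
      ⊆ ⋃ f : Fin N → Fin 4, {ω | ∀ t : Fin N,
          ω (C (t, f t)) = true ∧ ∀ i : Fin 4, i < f t → ω (C (t, i)) = false} := by
    intro ω hω
    have hne : ∀ t : Fin N, ({i : Fin 4 | ω (C (t, i)) = true} : Finset (Fin 4)).Nonempty := by
      intro t
      obtain ⟨i, hi⟩ := hω t
      exact ⟨i, by simp [hi]⟩
    refine Set.mem_iUnion.mpr ⟨fun t => ({i : Fin 4 | ω (C (t, i)) = true} : Finset (Fin 4)).min' (hne t), ?_⟩
    intro t
    constructor
    · have := Finset.min'_mem _ (hne t)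
      simpa using this
    · intro i hlt
      by_contra hcon
      have htrue : ω (C (t, i)) = true := by
        cases hval : ω (C (t, i)) with
        | false => exact absurd hval hcon
        | true => rfl
      have : ({i : Fin 4 | ω (C (t, i)) = true} : Finset (Fin 4)).min' (hne t) ≤ i :=
        Finset.min'_le _ _ (by simp [htrue])
      exact absurd (lt_of_le_of_lt this hlt) (lt_irrefl _)
  calc μ _ ≤ μ (⋃ f : Fin N → Fin 4, {ω | ∀ t : Fin N,
          ω (C (t, f t)) = true ∧ ∀ i : Fin 4, i < f t → ω (C (t, i)) = false}) :=
        measure_mono hsub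
    _ ≤ ∑' f : Fin N → Fin 4, μ {ω | ∀ t : Fin N,
          ω (C (t, f t)) = true ∧ ∀ i : Fin 4, i < f t → ω (C (t, i)) = false} :=
        measure_iUnion_le _
    _ = ∑ f : Fin N → Fin 4, μ {ω | ∀ t : Fin N,
          ω (C (t, f t)) = true ∧ ∀ i : Fin 4, i < f t → ω (C (t, i)) = false} :=
        tsum_fintype _
    _ = ∑ f : Fin N → Fin 4, ∏ t : Fin N,
          (ENNReal.ofReal p * (1 - ENNReal.ofReal p) ^ ((f t : ℕ))) := by
        apply Finset.sum_congr rfl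
        intro f _
        exact meas_piece μ hBer hIndep N C hC f
    _ = (∑ i : Fin 4, ENNReal.ofReal p * (1 - ENNReal.ofReal p) ^ ((i : ℕ))) ^ N := by
        have h2 := Finset.prod_univ_sum (κ := fun _ : Fin N => Fin 4)
          (fun _ => (Finset.univ : Finset (Fin 4)))
          (fun _ i => ENNReal.ofReal p * (1 - ENNReal.ofReal p) ^ ((i : ℕ)))
        rw [Fintype.piFinset_univ] at h2
        rw [← h2, Finset.prod_const, Finset.card_univ, Fintype.card_fin]

end Prob

section Geom

lemma cand_row {c : ℝ} (hc : 0 ≤ c) {v : ℕ} (h1 : (v:ℝ) ≤ c) (h2 : c ≤ (v:ℝ) + 1) :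
    v = ⌊c⌋₊ - 1 ∨ v = ⌊c⌋₊ := by
  have hv1 : v ≤ ⌊c⌋₊ := Nat.le_floor h1
  have hv2 : ⌊c⌋₊ ≤ v + 1 := by
    have := Nat.floor_le_floor (R := ℝ) h2
    rwa [show ((v:ℝ) + 1) = ((v + 1 : ℕ) : ℝ) by push_cast; ring, Nat.floor_natCast] at this
  omega

lemma cand_col {c : ℝ} (hc : 0 ≤ c) {u t : ℕ} (h1 : (u:ℝ) ≤ c + (2*t+1))
    (h2 : c + (2*t+1) ≤ (u:ℝ) + 1) :
    u = ⌊c⌋₊ + 2*t ∨ u = ⌊c⌋₊ + 2*t + 1 := by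
  have hut : (2*t : ℝ) ≤ u := by
    have : (0:ℝ) ≤ c := hc
    push_cast at h2 ⊢
    linarith
  have hutn : 2*t ≤ u := by exact_mod_cast hut
  have hfl1 : ⌊c⌋₊ ≤ u - 2*t := by
    have hcle : c ≤ ((u - 2*t : ℕ) : ℝ) := by
      push_cast [hutn]
      linarith
    have := Nat.floor_le_floor (R := ℝ) hcle
    rwa [Nat.floor_natCast] at this
  rcases Nat.lt_or_ge u (2*t+1) with hlt | hge
  · left; omega
  · have hfl2 : u - (2*t+1) ≤ ⌊c⌋₊ := by
      apply Nat.le_floor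
      push_cast [hge]
      linarith
    omega

variable {n m : ℕ}

lemma mk_inj_H (hn : 0 < n) (hm : 0 < m) (k U₀ V' N : ℕ)
    (hU : ∀ t : Fin N, U₀ + 2*(t:ℕ) + 1 < n ^ k) (hV : V' < m ^ k) (hm2 : 2 ≤ m ^ k) :
    Function.Injective (fun ti : Fin N × Fin 4 =>
      mkAddr hn hm k (U₀ + 2*(ti.1:ℕ) + (ti.2:ℕ) % 2) (V' + (ti.2:ℕ) / 2)) := by
  rintro ⟨t, i⟩ ⟨t', i'⟩ h
  simp only at h
  have hx := congrArg natX h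
  have hy := congrArg natY h
  rw [natX_mkAddr, natX_mkAddr] at hx
  rw [natY_mkAddr, natY_mkAddr] at hy
  have hi4 : (i:ℕ) < 4 := i.isLt
  have hi4' : (i':ℕ) < 4 := i'.isLt
  have hb1 : U₀ + 2*(t:ℕ) + (i:ℕ) % 2 < n ^ k := by have := hU t; omega
  have hb2 : U₀ + 2*(t':ℕ) + (i':ℕ) % 2 < n ^ k := by have := hU t'; omega
  rw [Nat.mod_eq_of_lt hb1, Nat.mod_eq_of_lt hb2] at hx
  have hrow : (i:ℕ)/2 = (i':ℕ)/2 := by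
    rcases Nat.lt_or_ge (V' + 1) (m ^ k) with hlt | hge
    · rw [Nat.mod_eq_of_lt (by omega), Nat.mod_eq_of_lt (by omega)] at hy
      omega
    · have hVe : V' + 1 = m ^ k := by omega
      have e0 : V' % m ^ k = V' := Nat.mod_eq_of_lt (by omega)
      have e1 : (V' + 1) % m ^ k = 0 := by rw [hVe, Nat.mod_self]
      have hc1 : (i:ℕ)/2 = 0 ∨ (i:ℕ)/2 = 1 := by omega
      have hc2 : (i':ℕ)/2 = 0 ∨ (i':ℕ)/2 = 1 := by omega
      rcases hc1 with h1 | h1 <;> rcases hc2 with h2 | h2 <;>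
        rw [h1, h2] at hy <;> simp only [Nat.add_zero] at hy <;> first
          | omega
          | (exfalso; rw [e0, e1] at hy; omega)
          | (exfalso; rw [e1, e0] at hy; omega)
  have ht : t = t' := by
    apply Fin.ext
    omega
  have hii : i = i' := by
    apply Fin.ext
    omega
  rw [ht, hii]

lemma mk_inj_V (hn : 0 < n) (hm : 0 < m) (k U₀ V' N : ℕ)
    (hU : ∀ t : Fin N, U₀ + 2*(t:ℕ) + 1 < m ^ k) (hV : V' < n ^ k) (hn2 : 2 ≤ n ^ k) :
    Function.Injective (fun ti : Fin N × Fin 4 =>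
      mkAddr hn hm k (V' + (ti.2:ℕ) / 2) (U₀ + 2*(ti.1:ℕ) + (ti.2:ℕ) % 2)) := by
  rintro ⟨t, i⟩ ⟨t', i'⟩ h
  simp only at h
  have hx := congrArg natX h
  have hy := congrArg natY h
  rw [natX_mkAddr, natX_mkAddr] at hx
  rw [natY_mkAddr, natY_mkAddr] at hy
  have hi4 : (i:ℕ) < 4 := i.isLt
  have hi4' : (i':ℕ) < 4 := i'.isLt
  have hb1 : U₀ + 2*(t:ℕ) + (i:ℕ) % 2 < m ^ k := by have := hU t; omega
  have hb2 : U₀ + 2*(t':ℕ) + (i':ℕ) % 2 < m ^ k := by have := hU t'; omega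
  rw [Nat.mod_eq_of_lt hb1, Nat.mod_eq_of_lt hb2] at hy
  have hrow : (i:ℕ)/2 = (i':ℕ)/2 := by
    rcases Nat.lt_or_ge (V' + 1) (n ^ k) with hlt | hge
    · rw [Nat.mod_eq_of_lt (by omega), Nat.mod_eq_of_lt (by omega)] at hx
      omega
    · have hVe : V' + 1 = n ^ k := by omega
      have e0 : V' % n ^ k = V' := Nat.mod_eq_of_lt (by omega)
      have e1 : (V' + 1) % n ^ k = 0 := by rw [hVe, Nat.mod_self]
      have hc1 : (i:ℕ)/2 = 0 ∨ (i:ℕ)/2 = 1 := by omega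
      have hc2 : (i':ℕ)/2 = 0 ∨ (i':ℕ)/2 = 1 := by omega
      rcases hc1 with h1 | h1 <;> rcases hc2 with h2 | h2 <;>
        rw [h1, h2] at hx <;> simp only [Nat.add_zero] at hx <;> first
          | omega
          | (exfalso; rw [e0, e1] at hx; omega)
          | (exfalso; rw [e1, e0] at hx; omega)
  have ht : t = t' := by
    apply Fin.ext
    omega
  have hii : i = i' := by
    apply Fin.ext
    omega
  rw [ht, hii]

lemma incl_H (hn : 0 < n) (hm : 0 < m) {a b y : ℝ} (ha : 0 ≤ a) (hab : a < b)
    (hy0 : 0 ≤ y) (hy1 : y ≤ 1) {k : ℕ} (hk : 1 ≤ k) {ω : List (Fin n × Fin m) → Bool}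
    (hseg : ∀ x ∈ Set.Icc a b, (x, y) ∈ affLimitSet n m ω) :
    ∃ V' < m ^ k, ∀ t : Fin (⌊(b - a) * (n:ℝ) ^ k / 2⌋₊), ∃ i : Fin 4,
      ω (mkAddr hn hm k (⌊a * (n:ℝ) ^ k⌋₊ + 2*(t:ℕ) + (i:ℕ) % 2)
          (V' + (i:ℕ) / 2)) = true := by
  have hnkpos : (0:ℝ) < (n:ℝ) ^ k := by positivity
  set N := ⌊(b - a) * (n:ℝ) ^ k / 2⌋₊ with hN
  set U₀ := ⌊a * (n:ℝ) ^ k⌋₊ with hU₀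
  set V := ⌊y * (m:ℝ) ^ k⌋₊ with hV
  have hVle : V ≤ m ^ k := by
    apply Nat.floor_le_of_le
    calc y * (m:ℝ) ^ k ≤ 1 * (m:ℝ) ^ k := by
          apply mul_le_mul_of_nonneg_right hy1 (by positivity)
      _ = ((m ^ k : ℕ) : ℝ) := by push_cast; ring
  refine ⟨V - 1, by have : 1 ≤ m ^ k := Nat.one_le_pow _ _ hm; omega, ?_⟩
  intro t
  -- the sample point
  set x := a + (2*(t:ℕ)+1) / (n:ℝ) ^ k with hx
  have hxmem : x ∈ Set.Icc a b := by
    constructor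
    · rw [hx]
      have : (0:ℝ) ≤ (2*(t:ℕ)+1) / (n:ℝ) ^ k := by positivity
      linarith
    · rw [hx]
      have htN : (t:ℕ) < N := t.isLt
      have h1 : ((t:ℕ):ℝ) ≤ (N:ℝ) - 1 := by
        have : ((t:ℕ):ℝ) + 1 ≤ (N:ℝ) := by exact_mod_cast htN
        linarith
      have h2 : (N:ℝ) ≤ (b - a) * (n:ℝ) ^ k / 2 := Nat.floor_le
        (by have hba : (0:ℝ) ≤ b - a := by linarith
            positivity)
      have h3 : (2*((t:ℕ):ℝ)+1) / (n:ℝ) ^ k ≤ b - a := by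
        rw [div_le_iff₀ hnkpos]
        linarith
      linarith
  obtain ⟨w, hwlen, hwret, hwmem⟩ := limit_mem_level (hseg x hxmem) k
  have hωw : ω w = true := by
    apply hwret w (List.prefix_refl w)
    intro hnil
    rw [hnil] at hwlen
    simp at hwlen
    omega
  obtain ⟨⟨hx1, hx2⟩, hy1', hy2'⟩ := mem_affRect hn hm hwmem
  rw [hwlen] at hx1 hx2 hy1' hy2'
  have hxexp : x * (n:ℝ) ^ k = a * (n:ℝ) ^ k + (2*(t:ℕ)+1) := by
    rw [hx]
    field_simp
  rw [hxexp] at hx1 hx2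
  -- column candidates
  have hcol := cand_col (by positivity : (0:ℝ) ≤ a * (n:ℝ) ^ k)
    (by exact_mod_cast hx1) (by exact_mod_cast hx2)
  -- row candidates
  have hrow := cand_row (by positivity : (0:ℝ) ≤ y * (m:ℝ) ^ k) hy1' hy2'
  -- define i
  have hrV : natY w = (V - 1) ∨ natY w = (V - 1) + 1 := by
    have hylt : natY w < m ^ k := by
      have := natY_lt w
      rwa [hwlen] at this
    rcases hrow with h | h
    · left; rw [h]
    · rcases Nat.eq_zero_or_pos V with h0 | h1
      · left; omega
      · right; omega
  have hcU : natX w = U₀ + 2*(t:ℕ) ∨ natX w = U₀ + 2*(t:ℕ) + 1 := hcol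
  set e : ℕ := natX w - (U₀ + 2*(t:ℕ)) with he
  set d : ℕ := natY w - (V - 1) with hd
  have he1 : e ≤ 1 := by omega
  have hd1 : d ≤ 1 := by omega
  refine ⟨⟨d * 2 + e, by omega⟩, ?_⟩
  have hieq : ((⟨d * 2 + e, by omega⟩ : Fin 4) : ℕ) = d * 2 + e := rfl
  rw [hieq]
  have hmod : (d * 2 + e) % 2 = e := by omega
  have hdiv : (d * 2 + e) / 2 = d := by omega
  rw [hmod, hdiv]
  have hcoleq : U₀ + 2*(t:ℕ) + e = natX w := by omega
  have hroweq : (V - 1) + d = natY w := by omega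
  rw [hcoleq, hroweq]
  have hweq : mkAddr hn hm k (natX w) (natY w) = w := by
    apply eq_of_natXY
    · rw [mkAddr_length, hwlen]
    · rw [natX_mkAddr, Nat.mod_eq_of_lt]
      have := natX_lt w
      rwa [hwlen] at this
    · rw [natY_mkAddr, Nat.mod_eq_of_lt]
      have := natY_lt w
      rwa [hwlen] at this
  rw [hweq, hωw]

lemma incl_V (hn : 0 < n) (hm : 0 < m) {a b x : ℝ} (ha : 0 ≤ a) (hab : a < b)
    (hx0 : 0 ≤ x) (hx1 : x ≤ 1) {k : ℕ} (hk : 1 ≤ k) {ω : List (Fin n × Fin m) → Bool}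
    (hseg : ∀ y ∈ Set.Icc a b, (x, y) ∈ affLimitSet n m ω) :
    ∃ V' < n ^ k, ∀ t : Fin (⌊(b - a) * (m:ℝ) ^ k / 2⌋₊), ∃ i : Fin 4,
      ω (mkAddr hn hm k (V' + (i:ℕ) / 2)
          (⌊a * (m:ℝ) ^ k⌋₊ + 2*(t:ℕ) + (i:ℕ) % 2)) = true := by
  have hmkpos : (0:ℝ) < (m:ℝ) ^ k := by positivity
  set N := ⌊(b - a) * (m:ℝ) ^ k / 2⌋₊ with hN
  set U₀ := ⌊a * (m:ℝ) ^ k⌋₊ with hU₀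
  set V := ⌊x * (n:ℝ) ^ k⌋₊ with hV
  have hVle : V ≤ n ^ k := by
    apply Nat.floor_le_of_le
    calc x * (n:ℝ) ^ k ≤ 1 * (n:ℝ) ^ k := by
          apply mul_le_mul_of_nonneg_right hx1 (by positivity)
      _ = ((n ^ k : ℕ) : ℝ) := by push_cast; ring
  refine ⟨V - 1, by have : 1 ≤ n ^ k := Nat.one_le_pow _ _ hn; omega, ?_⟩
  intro t
  set y := a + (2*(t:ℕ)+1) / (m:ℝ) ^ k with hy
  have hymem : y ∈ Set.Icc a b := by
    constructor
    · rw [hy]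
      have : (0:ℝ) ≤ (2*(t:ℕ)+1) / (m:ℝ) ^ k := by positivity
      linarith
    · rw [hy]
      have htN : (t:ℕ) < N := t.isLt
      have h1 : ((t:ℕ):ℝ) ≤ (N:ℝ) - 1 := by
        have : ((t:ℕ):ℝ) + 1 ≤ (N:ℝ) := by exact_mod_cast htN
        linarith
      have h2 : (N:ℝ) ≤ (b - a) * (m:ℝ) ^ k / 2 := Nat.floor_le
        (by have hba : (0:ℝ) ≤ b - a := by linarith
            positivity)
      have h3 : (2*((t:ℕ):ℝ)+1) / (m:ℝ) ^ k ≤ b - a := by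
        rw [div_le_iff₀ hmkpos]
        linarith
      linarith
  obtain ⟨w, hwlen, hwret, hwmem⟩ := limit_mem_level (hseg y hymem) k
  have hωw : ω w = true := by
    apply hwret w (List.prefix_refl w)
    intro hnil
    rw [hnil] at hwlen
    simp at hwlen
    omega
  obtain ⟨⟨hx1', hx2'⟩, hy1', hy2'⟩ := mem_affRect hn hm hwmem
  rw [hwlen] at hx1' hx2' hy1' hy2'
  have hyexp : y * (m:ℝ) ^ k = a * (m:ℝ) ^ k + (2*(t:ℕ)+1) := by
    rw [hy]
    field_simp
  rw [hyexp] at hy1' hy2'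
  have hcol := cand_col (by positivity : (0:ℝ) ≤ a * (m:ℝ) ^ k)
    (by exact_mod_cast hy1') (by exact_mod_cast hy2')
  have hrow := cand_row (by positivity : (0:ℝ) ≤ x * (n:ℝ) ^ k) hx1' hx2'
  have hrV : natX w = (V - 1) ∨ natX w = (V - 1) + 1 := by
    have hxlt : natX w < n ^ k := by
      have := natX_lt w
      rwa [hwlen] at this
    rcases hrow with h | h
    · left; rw [h]
    · rcases Nat.eq_zero_or_pos V with h0 | h1
      · left; omega
      · right; omega
  have hcU : natY w = U₀ + 2*(t:ℕ) ∨ natY w = U₀ + 2*(t:ℕ) + 1 := hcol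
  set e : ℕ := natY w - (U₀ + 2*(t:ℕ)) with he
  set d : ℕ := natX w - (V - 1) with hd
  have he1 : e ≤ 1 := by omega
  have hd1 : d ≤ 1 := by omega
  refine ⟨⟨d * 2 + e, by omega⟩, ?_⟩
  have hieq : ((⟨d * 2 + e, by omega⟩ : Fin 4) : ℕ) = d * 2 + e := rfl
  rw [hieq]
  have hmod : (d * 2 + e) % 2 = e := by omega
  have hdiv : (d * 2 + e) / 2 = d := by omega
  rw [hmod, hdiv]
  have hcoleq : U₀ + 2*(t:ℕ) + e = natY w := by omega
  have hroweq : (V - 1) + d = natX w := by omega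
  rw [hcoleq, hroweq]
  have hwmk : mkAddr hn hm k (natX w) (natY w) = w := by
    apply eq_of_natXY
    · rw [mkAddr_length, hwlen]
    · rw [natX_mkAddr, Nat.mod_eq_of_lt]
      have := natX_lt w
      rwa [hwlen] at this
    · rw [natY_mkAddr, Nat.mod_eq_of_lt]
      have := natY_lt w
      rwa [hwlen] at this
  rw [hwmk, hωw]

end Geom

section Limits

lemma sum_four_eq {p : ℝ} (hp0 : 0 < p) (hp1 : p < 1) :
    (∑ i : Fin 4, ENNReal.ofReal p * (1 - ENNReal.ofReal p) ^ ((i : ℕ)))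
      = ENNReal.ofReal (1 - (1-p)^4) := by
  have h1p : (0:ℝ) ≤ 1 - p := by linarith
  have hQ : (1 : ℝ≥0∞) - ENNReal.ofReal p = ENNReal.ofReal (1 - p) := by
    rw [ENNReal.ofReal_sub _ hp0.le, ENNReal.ofReal_one]
  have hterm : ∀ i : Fin 4, ENNReal.ofReal p * (1 - ENNReal.ofReal p) ^ ((i:ℕ))
      = ENNReal.ofReal (p * (1-p) ^ ((i:ℕ))) := fun i => by
    rw [hQ, ← ENNReal.ofReal_pow h1p, ← ENNReal.ofReal_mul hp0.le]
  calc (∑ i : Fin 4, ENNReal.ofReal p * (1 - ENNReal.ofReal p) ^ ((i : ℕ)))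
      = ∑ i : Fin 4, ENNReal.ofReal (p * (1-p) ^ ((i:ℕ))) :=
        Finset.sum_congr rfl (fun i _ => hterm i)
    _ = ENNReal.ofReal (∑ i : Fin 4, p * (1-p) ^ ((i:ℕ))) :=
        (ENNReal.ofReal_sum_of_nonneg (fun i _ => by positivity)).symm
    _ = ENNReal.ofReal (1 - (1-p)^4) := by
        congr 1
        rw [Fin.sum_univ_four, show ((0 : Fin 4) : ℕ) = 0 from rfl,
          show ((1 : Fin 4) : ℕ) = 1 from rfl, show ((2 : Fin 4) : ℕ) = 2 from rfl,
          show ((3 : Fin 4) : ℕ) = 3 from rfl]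
        ring

lemma tendsto_bound {L q : ℝ} (hL : 0 < L) (hq0 : 0 ≤ q) (hq1 : q < 1)
    (M β : ℕ) (hβ : 2 ≤ β) (hM : 1 ≤ M) :
    Filter.Tendsto (fun k : ℕ => (M:ℝ) ^ k * q ^ (⌊L * (β:ℝ) ^ k / 2⌋₊)) Filter.atTop (nhds 0) := by
  set r : ℝ := max q (1/2) with hr
  have hr0 : 0 < r := lt_max_of_lt_right (by norm_num)
  have hr1 : r < 1 := max_lt hq1 (by norm_num)
  have hqr : q ≤ r := le_max_left _ _
  obtain ⟨c, hc⟩ := exists_pow_lt_of_lt_one (x := 1 / (M:ℝ)) (by positivity) hr1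
  set C := max c 1 with hC
  have hCpos : 1 ≤ C := le_max_right _ _
  have hrC : r ^ C < 1 / (M:ℝ) := lt_of_le_of_lt
    (pow_le_pow_of_le_one hr0.le hr1.le (le_max_left _ _)) hc
  have hMrC0 : 0 ≤ (M:ℝ) * r ^ C := by positivity
  have hMrC : (M:ℝ) * r ^ C < 1 := by
    have hMpos : (0:ℝ) < M := by exact_mod_cast hM
    calc (M:ℝ) * r ^ C < (M:ℝ) * (1 / (M:ℝ)) := by
          apply mul_lt_mul_of_pos_left hrC hMpos
      _ = 1 := by field_simp
  -- eventually C * k ≤ N_k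
  have hev : ∀ᶠ k in Filter.atTop, C * k ≤ ⌊L * (β:ℝ) ^ k / 2⌋₊ := by
    have htend : Filter.Tendsto (fun k : ℕ => (k:ℝ) ^ 1 * (1/2 : ℝ) ^ k)
        Filter.atTop (nhds 0) :=
      (summable_pow_mul_geometric_of_norm_lt_one (R := ℝ) 1
        (by rw [Real.norm_eq_abs]; rw [abs_of_pos]; norm_num; norm_num)).tendsto_atTop_zero
    have hevlt := htend.eventually (eventually_lt_nhds (show (0:ℝ) < L / (2 * C) by positivity))
    filter_upwards [hevlt] with k hk
    apply Nat.le_floor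
    have hβk : (2:ℝ) ^ k ≤ (β:ℝ) ^ k := by
      apply pow_le_pow_left₀ (by norm_num)
      exact_mod_cast hβ
    have h2k : (0:ℝ) < 2 ^ k := by positivity
    have hk' : (k:ℝ) ^ 1 * (1/2:ℝ) ^ k < L / (2 * C) := hk
    have hCk : (C:ℝ) * k ≤ L * (2:ℝ) ^ k / 2 := by
      have hCpos' : (0:ℝ) < C := by exact_mod_cast lt_of_lt_of_le one_pos hCpos
      have hprod : (1/2:ℝ) ^ k * 2 ^ k = 1 := by
        rw [← mul_pow]
        norm_num
      rw [pow_one] at hk'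
      have hmul := mul_lt_mul_of_pos_right hk' h2k
      have hk2 : (k:ℝ) < L / (2*C) * 2 ^ k := by nlinarith [hmul, hprod]
      have hmul2 := mul_lt_mul_of_pos_left hk2 hCpos'
      have heq : (C:ℝ) * (L / (2*C) * 2 ^ k) = L * 2 ^ k / 2 := by
        field_simp
      linarith
    push_cast
    calc ((C:ℝ)) * k ≤ L * (2:ℝ) ^ k / 2 := hCk
      _ ≤ L * (β:ℝ) ^ k / 2 := by
          apply div_le_div_of_nonneg_right _ (by norm_num)
          exact mul_le_mul_of_nonneg_left hβk hL.le
  apply squeeze_zero' (g := fun k => ((M:ℝ) * r ^ C) ^ k)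
  · filter_upwards with k
    positivity
  · filter_upwards [hev] with k hk
    have hq' : q ^ (⌊L * (β:ℝ) ^ k / 2⌋₊) ≤ r ^ (C * k) := by
      calc q ^ (⌊L * (β:ℝ) ^ k / 2⌋₊) ≤ r ^ (⌊L * (β:ℝ) ^ k / 2⌋₊) :=
            pow_le_pow_left₀ hq0 hqr _
        _ ≤ r ^ (C * k) := pow_le_pow_of_le_one hr0.le hr1.le hk
    calc (M:ℝ) ^ k * q ^ (⌊L * (β:ℝ) ^ k / 2⌋₊) ≤ (M:ℝ) ^ k * r ^ (C * k) := by
          apply mul_le_mul_of_nonneg_left hq' (by positivity)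
      _ = ((M:ℝ) * r ^ C) ^ k := by
          rw [mul_pow, ← pow_mul]
  · exact tendsto_pow_atTop_nhds_zero_of_lt_one hMrC0 hMrC

end Limits

section Main

variable {n m : ℕ} {p : ℝ}

lemma null_H (hn2 : 2 ≤ n) (hnm : n < m) (hp0 : 0 < p) (hp1 : p < 1)
    (μ : Measure ((List (Fin n × Fin m)) → Bool)) [IsProbabilityMeasure μ]
    (hBer : ∀ w : List (Fin n × Fin m), μ {ω | ω w = true} = ENNReal.ofReal p)
    (hIndep : iIndepFun
      (fun w => fun ω : (List (Fin n × Fin m)) → Bool => ω w) μ)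
    {a b : ℝ} (ha : 0 ≤ a) (hab : a < b) (hb : b < 1) :
    μ {ω | ∃ y : ℝ, ∀ x ∈ Set.Icc a b, (x, y) ∈ affLimitSet n m ω} = 0 := by
  have hn : 0 < n := by omega
  have hm : 0 < m := by omega
  set q : ℝ := 1 - (1-p)^4 with hqdef
  have h1p0 : (0:ℝ) < 1 - p := by linarith
  have hq0 : 0 ≤ q := by
    have : (1-p)^4 < 1 := pow_lt_one₀ h1p0.le (by linarith) (by norm_num)
    rw [hqdef]; linarith
  have hq1 : q < 1 := by
    have : 0 < (1-p)^4 := by positivity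
    rw [hqdef]; linarith
  set S := {ω : List (Fin n × Fin m) → Bool | ∃ y : ℝ, ∀ x ∈ Set.Icc a b,
    (x, y) ∈ affLimitSet n m ω} with hS
  have key : ∀ k : ℕ, 1 ≤ k →
      μ S ≤ ENNReal.ofReal ((m:ℝ) ^ k * q ^ (⌊(b - a) * (n:ℝ) ^ k / 2⌋₊)) := by
    intro k hk
    set N := ⌊(b - a) * (n:ℝ) ^ k / 2⌋₊ with hN
    set U₀ := ⌊a * (n:ℝ) ^ k⌋₊ with hU₀
    have hnkpos : (0:ℝ) < (n:ℝ) ^ k := by positivity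
    have hU : ∀ t : Fin N, U₀ + 2*(t:ℕ) + 1 < n ^ k := by
      intro t
      have h1 : (U₀:ℝ) ≤ a * (n:ℝ) ^ k := Nat.floor_le (by positivity)
      have h2 : ((t:ℕ):ℝ) + 1 ≤ (N:ℝ) := by exact_mod_cast t.isLt
      have h3 : (N:ℝ) ≤ (b - a) * (n:ℝ) ^ k / 2 := Nat.floor_le
        (by have : (0:ℝ) ≤ b - a := by linarith
            positivity)
      have h4 : (b:ℝ) * (n:ℝ) ^ k < (n:ℝ) ^ k := by nlinarith
      have : ((U₀ + 2*(t:ℕ) + 1 : ℕ) : ℝ) < ((n ^ k : ℕ) : ℝ) := by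
        push_cast
        nlinarith
      exact_mod_cast this
    have hsub : S ⊆ ⋃ V' ∈ Finset.range (m ^ k),
        {ω : List (Fin n × Fin m) → Bool | ∀ t : Fin N, ∃ i : Fin 4,
          ω (mkAddr hn hm k (U₀ + 2*(t:ℕ) + (i:ℕ) % 2) (V' + (i:ℕ) / 2)) = true} := by
      rintro ω ⟨y, hy⟩
      have haIcc : a ∈ Set.Icc a b := ⟨le_refl _, hab.le⟩
      obtain ⟨_, _, hy0, hy1⟩ := limit_unit_square hn hm (hy a haIcc)
      obtain ⟨V', hV', hVall⟩ := incl_H hn hm ha hab hy0 hy1 hk hy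
      exact Set.mem_iUnion₂.mpr ⟨V', Finset.mem_range.mpr hV', hVall⟩
    have hm2 : 2 ≤ m ^ k := by
      calc 2 ≤ m := by omega
        _ = m ^ 1 := (pow_one m).symm
        _ ≤ m ^ k := Nat.pow_le_pow_right (by omega) hk
    calc μ S ≤ ∑ V' ∈ Finset.range (m ^ k), μ
          {ω : List (Fin n × Fin m) → Bool | ∀ t : Fin N, ∃ i : Fin 4,
            ω (mkAddr hn hm k (U₀ + 2*(t:ℕ) + (i:ℕ) % 2) (V' + (i:ℕ) / 2)) = true} :=
          le_trans (measure_mono hsub) (measure_biUnion_finset_le _ _)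
      _ ≤ ∑ V' ∈ Finset.range (m ^ k),
            (∑ i : Fin 4, ENNReal.ofReal p * (1 - ENNReal.ofReal p) ^ ((i : ℕ))) ^ N := by
          apply Finset.sum_le_sum
          intro V' hV'
          exact prob_core μ hBer hIndep N _
            (mk_inj_H hn hm k U₀ V' N hU (Finset.mem_range.mp hV') hm2)
      _ = (m ^ k : ℕ) • (∑ i : Fin 4, ENNReal.ofReal p * (1 - ENNReal.ofReal p) ^ ((i : ℕ))) ^ N := by
          rw [Finset.sum_const, Finset.card_range]
      _ = ENNReal.ofReal ((m:ℝ) ^ k * q ^ N) := by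
          rw [sum_four_eq hp0 hp1, ← hqdef, ← ENNReal.ofReal_pow hq0]
          rw [nsmul_eq_mul]
          rw [ENNReal.ofReal_mul (by positivity)]
          congr 1
          rw [← ENNReal.ofReal_natCast]
          congr 1
          push_cast
          ring
  have htend : Filter.Tendsto
      (fun k : ℕ => ENNReal.ofReal ((m:ℝ) ^ k * q ^ (⌊(b - a) * (n:ℝ) ^ k / 2⌋₊)))
      Filter.atTop (nhds 0) := by
    rw [← ENNReal.ofReal_zero]
    apply ENNReal.tendsto_ofReal
    exact tendsto_bound (by linarith) hq0 hq1 m n hn2 (by omega)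
  have hle : μ S ≤ 0 := by
    apply ge_of_tendsto htend
    filter_upwards [Filter.eventually_ge_atTop 1] with k hk
    exact key k hk
  exact le_antisymm hle zero_le

lemma null_V (hn2 : 2 ≤ n) (hnm : n < m) (hp0 : 0 < p) (hp1 : p < 1)
    (μ : Measure ((List (Fin n × Fin m)) → Bool)) [IsProbabilityMeasure μ]
    (hBer : ∀ w : List (Fin n × Fin m), μ {ω | ω w = true} = ENNReal.ofReal p)
    (hIndep : iIndepFun
      (fun w => fun ω : (List (Fin n × Fin m)) → Bool => ω w) μ)
    {a b : ℝ} (ha : 0 ≤ a) (hab : a < b) (hb : b < 1) :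
    μ {ω | ∃ x : ℝ, ∀ y ∈ Set.Icc a b, (x, y) ∈ affLimitSet n m ω} = 0 := by
  have hn : 0 < n := by omega
  have hm : 0 < m := by omega
  set q : ℝ := 1 - (1-p)^4 with hqdef
  have h1p0 : (0:ℝ) < 1 - p := by linarith
  have hq0 : 0 ≤ q := by
    have : (1-p)^4 < 1 := pow_lt_one₀ h1p0.le (by linarith) (by norm_num)
    rw [hqdef]; linarith
  have hq1 : q < 1 := by
    have : 0 < (1-p)^4 := by positivity
    rw [hqdef]; linarith
  set S := {ω : List (Fin n × Fin m) → Bool | ∃ x : ℝ, ∀ y ∈ Set.Icc a b,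
    (x, y) ∈ affLimitSet n m ω} with hS
  have key : ∀ k : ℕ, 1 ≤ k →
      μ S ≤ ENNReal.ofReal ((m:ℝ) ^ k * q ^ (⌊(b - a) * (m:ℝ) ^ k / 2⌋₊)) := by
    intro k hk
    set N := ⌊(b - a) * (m:ℝ) ^ k / 2⌋₊ with hN
    set U₀ := ⌊a * (m:ℝ) ^ k⌋₊ with hU₀
    have hmkpos : (0:ℝ) < (m:ℝ) ^ k := by positivity
    have hU : ∀ t : Fin N, U₀ + 2*(t:ℕ) + 1 < m ^ k := by
      intro t
      have h1 : (U₀:ℝ) ≤ a * (m:ℝ) ^ k := Nat.floor_le (by positivity)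
      have h2 : ((t:ℕ):ℝ) + 1 ≤ (N:ℝ) := by exact_mod_cast t.isLt
      have h3 : (N:ℝ) ≤ (b - a) * (m:ℝ) ^ k / 2 := Nat.floor_le
        (by have : (0:ℝ) ≤ b - a := by linarith
            positivity)
      have h4 : (b:ℝ) * (m:ℝ) ^ k < (m:ℝ) ^ k := by nlinarith
      have : ((U₀ + 2*(t:ℕ) + 1 : ℕ) : ℝ) < ((m ^ k : ℕ) : ℝ) := by
        push_cast
        nlinarith
      exact_mod_cast this
    have hsub : S ⊆ ⋃ V' ∈ Finset.range (n ^ k),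
        {ω : List (Fin n × Fin m) → Bool | ∀ t : Fin N, ∃ i : Fin 4,
          ω (mkAddr hn hm k (V' + (i:ℕ) / 2) (U₀ + 2*(t:ℕ) + (i:ℕ) % 2)) = true} := by
      rintro ω ⟨x, hx⟩
      have haIcc : a ∈ Set.Icc a b := ⟨le_refl _, hab.le⟩
      obtain ⟨hx0, hx1, _, _⟩ := limit_unit_square hn hm (hx a haIcc)
      obtain ⟨V', hV', hVall⟩ := incl_V hn hm ha hab hx0 hx1 hk hx
      exact Set.mem_iUnion₂.mpr ⟨V', Finset.mem_range.mpr hV', hVall⟩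
    have hn2' : 2 ≤ n ^ k := by
      calc 2 ≤ n := by omega
        _ = n ^ 1 := (pow_one n).symm
        _ ≤ n ^ k := Nat.pow_le_pow_right (by omega) hk
    calc μ S ≤ ∑ V' ∈ Finset.range (n ^ k), μ
          {ω : List (Fin n × Fin m) → Bool | ∀ t : Fin N, ∃ i : Fin 4,
            ω (mkAddr hn hm k (V' + (i:ℕ) / 2) (U₀ + 2*(t:ℕ) + (i:ℕ) % 2)) = true} :=
          le_trans (measure_mono hsub) (measure_biUnion_finset_le _ _)
      _ ≤ ∑ V' ∈ Finset.range (n ^ k),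
            (∑ i : Fin 4, ENNReal.ofReal p * (1 - ENNReal.ofReal p) ^ ((i : ℕ))) ^ N := by
          apply Finset.sum_le_sum
          intro V' hV'
          exact prob_core μ hBer hIndep N _
            (mk_inj_V hn hm k U₀ V' N hU (Finset.mem_range.mp hV') hn2')
      _ = (n ^ k : ℕ) • (∑ i : Fin 4, ENNReal.ofReal p * (1 - ENNReal.ofReal p) ^ ((i : ℕ))) ^ N := by
          rw [Finset.sum_const, Finset.card_range]
      _ ≤ (m ^ k : ℕ) • (∑ i : Fin 4, ENNReal.ofReal p * (1 - ENNReal.ofReal p) ^ ((i : ℕ))) ^ N := by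
          have : (n ^ k : ℕ) ≤ (m ^ k : ℕ) := Nat.pow_le_pow_left (by omega) k
          exact smul_le_smul_of_nonneg_right this zero_le
      _ = ENNReal.ofReal ((m:ℝ) ^ k * q ^ N) := by
          rw [sum_four_eq hp0 hp1, ← hqdef, ← ENNReal.ofReal_pow hq0]
          rw [nsmul_eq_mul]
          rw [ENNReal.ofReal_mul (by positivity)]
          congr 1
          rw [← ENNReal.ofReal_natCast]
          congr 1
          push_cast
          ring
  have htend : Filter.Tendsto
      (fun k : ℕ => ENNReal.ofReal ((m:ℝ) ^ k * q ^ (⌊(b - a) * (m:ℝ) ^ k / 2⌋₊)))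
      Filter.atTop (nhds 0) := by
    rw [← ENNReal.ofReal_zero]
    apply ENNReal.tendsto_ofReal
    exact tendsto_bound (by linarith) hq0 hq1 m m (by omega) (by omega)
  have hle : μ S ≤ 0 := by
    apply ge_of_tendsto htend
    filter_upwards [Filter.eventually_ge_atTop 1] with k hk
    exact key k hk
  exact le_antisymm hle zero_le

end Main

section Master

variable {n m : ℕ}

lemma seg_mem_H {q₁ q₂ : ℝ × ℝ} (hy : q₁.2 = q₂.2) (hlt : q₁.1 < q₂.1) {x : ℝ}
    (h1 : q₁.1 ≤ x) (h2 : x ≤ q₂.1) : (x, q₁.2) ∈ segment ℝ q₁ q₂ := by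
  have hd : (0:ℝ) < q₂.1 - q₁.1 := by linarith
  refine ⟨(q₂.1 - x) / (q₂.1 - q₁.1), (x - q₁.1) / (q₂.1 - q₁.1),
    by apply div_nonneg <;> linarith, by apply div_nonneg <;> linarith, ?_, ?_⟩
  · field_simp
    ring
  · have e1 : ((q₂.1 - x) / (q₂.1 - q₁.1)) • q₁ =
        (((q₂.1 - x) / (q₂.1 - q₁.1)) * q₁.1, ((q₂.1 - x) / (q₂.1 - q₁.1)) * q₁.2) := rfl
    have e2 : ((x - q₁.1) / (q₂.1 - q₁.1)) • q₂ =
        (((x - q₁.1) / (q₂.1 - q₁.1)) * q₂.1, ((x - q₁.1) / (q₂.1 - q₁.1)) * q₂.2) := rfl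
    rw [e1, e2, Prod.mk_add_mk, Prod.mk.injEq]
    constructor
    · field_simp
      ring
    · rw [← hy]
      field_simp
      ring

lemma seg_mem_V {q₁ q₂ : ℝ × ℝ} (hx : q₁.1 = q₂.1) (hlt : q₁.2 < q₂.2) {y : ℝ}
    (h1 : q₁.2 ≤ y) (h2 : y ≤ q₂.2) : (q₁.1, y) ∈ segment ℝ q₁ q₂ := by
  have hd : (0:ℝ) < q₂.2 - q₁.2 := by linarith
  refine ⟨(q₂.2 - y) / (q₂.2 - q₁.2), (y - q₁.2) / (q₂.2 - q₁.2),
    by apply div_nonneg <;> linarith, by apply div_nonneg <;> linarith, ?_, ?_⟩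
  · field_simp
    ring
  · have e1 : ((q₂.2 - y) / (q₂.2 - q₁.2)) • q₁ =
        (((q₂.2 - y) / (q₂.2 - q₁.2)) * q₁.1, ((q₂.2 - y) / (q₂.2 - q₁.2)) * q₁.2) := rfl
    have e2 : ((y - q₁.2) / (q₂.2 - q₁.2)) • q₂ =
        (((y - q₁.2) / (q₂.2 - q₁.2)) * q₂.1, ((y - q₁.2) / (q₂.2 - q₁.2)) * q₂.2) := rfl
    rw [e1, e2, Prod.mk_add_mk, Prod.mk.injEq]
    constructor
    · rw [← hx]
      field_simp
      ring
    · field_simp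
      ring

end Master

section Bad

def badH (n m : ℕ) (a b : ℚ) : Set ((List (Fin n × Fin m)) → Bool) :=
  {ω | (0:ℝ) ≤ (a:ℝ) ∧ (a:ℝ) < (b:ℝ) ∧ (b:ℝ) < 1 ∧
    ∃ y : ℝ, ∀ x ∈ Set.Icc (a:ℝ) (b:ℝ), (x, y) ∈ affLimitSet n m ω}

def badV (n m : ℕ) (a b : ℚ) : Set ((List (Fin n × Fin m)) → Bool) :=
  {ω | (0:ℝ) ≤ (a:ℝ) ∧ (a:ℝ) < (b:ℝ) ∧ (b:ℝ) < 1 ∧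
    ∃ x : ℝ, ∀ y ∈ Set.Icc (a:ℝ) (b:ℝ), (x, y) ∈ affLimitSet n m ω}

variable {n m : ℕ}

lemma mem_badH (hn0 : 0 < n) (hm0 : 0 < m) {ω : List (Fin n × Fin m) → Bool}
    {q₁ q₂ : ℝ × ℝ} (hy : q₁.2 = q₂.2) (hlt : q₁.1 < q₂.1)
    (hsub : segment ℝ q₁ q₂ ⊆ affLimitSet n m ω) :
    ∃ ab : ℚ × ℚ, ω ∈ badH n m ab.1 ab.2 := by
  have hq1F : (q₁.1, q₁.2) ∈ affLimitSet n m ω := by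
    rw [Prod.mk.eta]
    exact hsub (left_mem_segment ℝ q₁ q₂)
  have hq2F : (q₂.1, q₂.2) ∈ affLimitSet n m ω := by
    rw [Prod.mk.eta]
    exact hsub (right_mem_segment ℝ q₁ q₂)
  have h1 := limit_unit_square hn0 hm0 hq1F
  have h2 := limit_unit_square hn0 hm0 hq2F
  obtain ⟨aq, ha1, ha2⟩ := exists_rat_btwn hlt
  obtain ⟨bq, hb1, hb2⟩ := exists_rat_btwn ha2
  refine ⟨(aq, bq), le_of_lt (lt_of_le_of_lt h1.1 ha1), hb1, lt_of_lt_of_le hb2 h2.2.1,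
    q₁.2, ?_⟩
  intro x hx
  exact hsub (seg_mem_H hy hlt (le_trans (le_of_lt ha1) hx.1) (le_trans hx.2 (le_of_lt hb2)))

lemma mem_badV (hn0 : 0 < n) (hm0 : 0 < m) {ω : List (Fin n × Fin m) → Bool}
    {q₁ q₂ : ℝ × ℝ} (hx : q₁.1 = q₂.1) (hlt : q₁.2 < q₂.2)
    (hsub : segment ℝ q₁ q₂ ⊆ affLimitSet n m ω) :
    ∃ ab : ℚ × ℚ, ω ∈ badV n m ab.1 ab.2 := by
  have hq1F : (q₁.1, q₁.2) ∈ affLimitSet n m ω := by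
    rw [Prod.mk.eta]
    exact hsub (left_mem_segment ℝ q₁ q₂)
  have hq2F : (q₂.1, q₂.2) ∈ affLimitSet n m ω := by
    rw [Prod.mk.eta]
    exact hsub (right_mem_segment ℝ q₁ q₂)
  have h1 := limit_unit_square hn0 hm0 hq1F
  have h2 := limit_unit_square hn0 hm0 hq2F
  obtain ⟨aq, ha1, ha2⟩ := exists_rat_btwn hlt
  obtain ⟨bq, hb1, hb2⟩ := exists_rat_btwn ha2
  refine ⟨(aq, bq), le_of_lt (lt_of_le_of_lt h1.2.2.1 ha1), hb1, lt_of_lt_of_le hb2 h2.2.2.2,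
    q₁.1, ?_⟩
  intro y hy
  exact hsub (seg_mem_V hx hlt (le_trans (le_of_lt ha1) hy.1) (le_trans hy.2 (le_of_lt hb2)))

end Bad

end Aff

open Aff

/-- almost surely the statistically self-affine fractal percolation set
contains no horizontal and no vertical line segment (a nondegenerate segment between two
points sharing a coordinate). -/
theorem stmt_18 (n m : ℕ) (hn : 2 ≤ n) (hnm : n < m) (p : ℝ) (hp0 : 0 < p) (hp1 : p < 1)
    (μ : Measure ((List (Fin n × Fin m)) → Bool)) [IsProbabilityMeasure μ]
    (hBer : ∀ w : List (Fin n × Fin m), μ {ω | ω w = true} = ENNReal.ofReal p)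
    (hIndep : iIndepFun
      (fun w => fun ω : (List (Fin n × Fin m)) → Bool => ω w) μ) :
    μ {ω | ∃ q₁ q₂ : ℝ × ℝ, q₁ ≠ q₂ ∧ (q₁.1 = q₂.1 ∨ q₁.2 = q₂.2) ∧
        segment ℝ q₁ q₂ ⊆ affLimitSet n m ω} = 0 := by

  have hn0 : 0 < n := by omega
  have hm0 : 0 < m := by omega
  have hsubset : {ω : List (Fin n × Fin m) → Bool | ∃ q₁ q₂ : ℝ × ℝ, q₁ ≠ q₂ ∧
      (q₁.1 = q₂.1 ∨ q₁.2 = q₂.2) ∧ segment ℝ q₁ q₂ ⊆ affLimitSet n m ω}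
      ⊆ ⋃ ab : ℚ × ℚ, (badH n m ab.1 ab.2 ∪ badV n m ab.1 ab.2) := by
    rintro ω ⟨q₁, q₂, hne, hor, hsub⟩
    rcases hor with hx | hy
    · have hyne : q₁.2 ≠ q₂.2 := fun h => hne (Prod.ext hx h)
      rcases hyne.lt_or_gt with hlt | hlt
      · obtain ⟨ab, hab⟩ := mem_badV hn0 hm0 hx hlt hsub
        exact Set.mem_iUnion.mpr ⟨ab, Or.inr hab⟩
      · rw [segment_symm] at hsub
        obtain ⟨ab, hab⟩ := mem_badV hn0 hm0 hx.symm hlt hsub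
        exact Set.mem_iUnion.mpr ⟨ab, Or.inr hab⟩
    · have hxne : q₁.1 ≠ q₂.1 := fun h => hne (Prod.ext h hy)
      rcases hxne.lt_or_gt with hlt | hlt
      · obtain ⟨ab, hab⟩ := mem_badH hn0 hm0 hy hlt hsub
        exact Set.mem_iUnion.mpr ⟨ab, Or.inl hab⟩
      · rw [segment_symm] at hsub
        obtain ⟨ab, hab⟩ := mem_badH hn0 hm0 hy.symm hlt hsub
        exact Set.mem_iUnion.mpr ⟨ab, Or.inl hab⟩
  apply measure_mono_null hsubset
  apply measure_iUnion_null
  intro ab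
  apply measure_union_null
  · by_cases h0 : (0:ℝ) ≤ (ab.1:ℝ) ∧ (ab.1:ℝ) < (ab.2:ℝ) ∧ ((ab.2:ℝ)) < 1
    · have heq : badH n m ab.1 ab.2 = {ω | ∃ y : ℝ, ∀ x ∈ Set.Icc (ab.1:ℝ) (ab.2:ℝ),
          (x, y) ∈ affLimitSet n m ω} := by
        ext ω
        constructor
        · rintro ⟨_, _, _, h⟩
          exact h
        · intro h
          exact ⟨h0.1, h0.2.1, h0.2.2, h⟩
      rw [heq]
      exact null_H hn hnm hp0 hp1 μ hBer hIndep h0.1 h0.2.1 h0.2.2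
    · have heq : badH n m ab.1 ab.2 = ∅ := by
        ext ω
        simp only [badH, Set.mem_setOf_eq, Set.mem_empty_iff_false, iff_false]
        rintro ⟨h1, h2, h3, _⟩
        exact h0 ⟨h1, h2, h3⟩
      rw [heq]
      exact measure_empty
  · by_cases h0 : (0:ℝ) ≤ (ab.1:ℝ) ∧ (ab.1:ℝ) < (ab.2:ℝ) ∧ ((ab.2:ℝ)) < 1
    · have heq : badV n m ab.1 ab.2 = {ω | ∃ x : ℝ, ∀ y ∈ Set.Icc (ab.1:ℝ) (ab.2:ℝ),
          (x, y) ∈ affLimitSet n m ω} := by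
        ext ω
        constructor
        · rintro ⟨_, _, _, h⟩
          exact h
        · intro h
          exact ⟨h0.1, h0.2.1, h0.2.2, h⟩
      rw [heq]
      exact null_V hn hnm hp0 hp1 μ hBer hIndep h0.1 h0.2.1 h0.2.2
    · have heq : badV n m ab.1 ab.2 = ∅ := by
        ext ω
        simp only [badV, Set.mem_setOf_eq, Set.mem_empty_iff_false, iff_false]
        rintro ⟨h1, h2, h3, _⟩
        exact h0 ⟨h1, h2, h3⟩
      rw [heq]
      exact measure_empty
end
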